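/- For γ > 0 and σ₀ > 0, the function Q_γ(σ) = -σ^{-γ/(1+γ)} (1 + γσ₀²/σ²)^{-1/2} on (0, ∞) attains its minimum uniquely at σ = σ₀. -/

import Mathlib

/-!
Squaring `-Q_γ(σ)` gives `(σ²)^w / (σ² + γσ₀²)` with `w = 1/(1+γ)`, and comparing this with its
value at `σ = σ₀` is exactly the strict weighted AM–GM inequality
`(σ²)^w (σ₀²)^(1-w) < w σ² + (1-w) σ₀²` for `σ² ≠ σ₀²`.
-/

open Real

lemma sq_rpow_neg_mul_one_add_div_sq_rpow_neg_half (c : ℝ) {b s : ℝ} (hb : 0 ≤ b) (hs : 0 < s) :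
    (s ^ (-c) * (1 + b / s ^ 2) ^ (-(1 / 2) : ℝ)) ^ 2 = (s ^ 2) ^ (1 - c) / (s ^ 2 + b) := by
  have hs2 : 0 < s ^ 2 := by positivity
  have hfirst : (s ^ (-c)) ^ 2 = (s ^ 2) ^ (-c) := by
    rw [← rpow_mul_natCast hs.le, mul_comm, rpow_natCast_mul hs.le]
  have hsecond : ((1 + b / s ^ 2) ^ (-(1 / 2) : ℝ)) ^ 2 = s ^ 2 / (s ^ 2 + b) := by
    rw [← rpow_mul_natCast (by positivity), show (-(1 / 2) * ((2 : ℕ) : ℝ)) = -1 by norm_num,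
      rpow_neg_one]
    field_simp
  rw [mul_pow, hfirst, hsecond, sub_eq_neg_add, rpow_add hs2, rpow_one]
  ring

lemma rpow_div_add_mul_lt_of_ne {γ x y : ℝ} (hγ : 0 < γ) (hx : 0 ≤ x) (hy : 0 < y) (hxy : x ≠ y) :
    x ^ (1 / (1 + γ)) / (x + γ * y) < y ^ (1 / (1 + γ)) / (y + γ * y) := by
  have hw : (1 + γ) * (1 / (1 + γ)) = 1 := by field_simp
  have hw_pos : 0 < 1 / (1 + γ) := by positivity
  generalize 1 / (1 + γ) = w at hw hw_pos ⊢
  have amgm : x ^ w * y ^ (1 - w) < w * x + (1 - w) * y :=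
    (geom_mean_lt_arith_mean2_weighted_iff_of_pos hw_pos (by nlinarith) hx hy.le
      (add_sub_cancel w 1)).mpr hxy
  have hy_split : y ^ w * y ^ (1 - w) = y := by rw [← rpow_add hy, add_sub_cancel, rpow_one]
  rw [div_lt_div_iff₀ (by positivity) (by positivity)]
  calc x ^ w * (y + γ * y) = (1 + γ) * y ^ w * (x ^ w * y ^ (1 - w)) := by
        linear_combination (-(1 + γ) * x ^ w) * hy_split
    _ < (1 + γ) * y ^ w * (w * x + (1 - w) * y) :=
        mul_lt_mul_of_pos_left amgm (by positivity)
    _ = y ^ w * (x + γ * y) := by linear_combination y ^ w * (x - y) * hw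

lemma neg_Qgamma_lt_of_ne {γ σ₀ σ : ℝ} (hγ : 0 < γ) (hσ₀ : 0 < σ₀) (hσ : 0 < σ) (hne : σ ≠ σ₀) :
    σ ^ (-(γ / (1 + γ))) * (1 + γ * σ₀ ^ 2 / σ ^ 2) ^ (-(1 / 2) : ℝ) <
      σ₀ ^ (-(γ / (1 + γ))) * (1 + γ * σ₀ ^ 2 / σ₀ ^ 2) ^ (-(1 / 2) : ℝ) := by
  have hexp : 1 - γ / (1 + γ) = 1 / (1 + γ) := by field_simp; ring
  have hsq_ne : σ ^ 2 ≠ σ₀ ^ 2 := fun h ↦ hne ((pow_left_inj₀ hσ.le hσ₀.le two_ne_zero).mp h)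
  rw [← pow_lt_pow_iff_left₀ (by positivity) (by positivity) two_ne_zero,
    sq_rpow_neg_mul_one_add_div_sq_rpow_neg_half _ (by positivity) hσ,
    sq_rpow_neg_mul_one_add_div_sq_rpow_neg_half _ (by positivity) hσ₀, hexp]
  exact rpow_div_add_mul_lt_of_ne hγ (sq_nonneg σ) (pow_pos hσ₀ 2) hsq_ne

theorem Qgamma_min_at_sigma0 (γ σ₀ : ℝ) (hγ : 0 < γ) (hσ₀ : 0 < σ₀) :
    ∀ σ ∈ Set.Ioi (0 : ℝ),
      (fun s : ℝ => -s ^ (-(γ / (1 + γ))) * (1 + γ * σ₀ ^ 2 / s ^ 2) ^ (-(1 / 2) : ℝ)) σ₀ ≤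
        (fun s : ℝ => -s ^ (-(γ / (1 + γ))) * (1 + γ * σ₀ ^ 2 / s ^ 2) ^ (-(1 / 2) : ℝ)) σ ∧
      ((fun s : ℝ => -s ^ (-(γ / (1 + γ))) * (1 + γ * σ₀ ^ 2 / s ^ 2) ^ (-(1 / 2) : ℝ)) σ =
        (fun s : ℝ => -s ^ (-(γ / (1 + γ))) * (1 + γ * σ₀ ^ 2 / s ^ 2) ^ (-(1 / 2) : ℝ)) σ₀ →
        σ = σ₀) := by
  intro σ hσ
  rcases eq_or_ne σ σ₀ with rfl | hne
  · exact ⟨le_rfl, fun _ ↦ rfl⟩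
  have hlt := neg_Qgamma_lt_of_ne hγ hσ₀ hσ hne
  simp only [neg_mul]
  exact ⟨(neg_lt_neg hlt).le, fun heq ↦ absurd (neg_inj.mp heq) hlt.ne⟩
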